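/- arXiv:2112.06077 — 2 statements merged into one kernel-verified Lean document; each statement's English description precedes it below -/
import Mathlib

section
/- Let l ≥ 4. Realize the root system Φ of type D_l concretely as Φ = {±eᵢ ± eⱼ : 1 ≤ i < j ≤ l} ⊂ ℚˡ with the standard inner product ⟨·,·⟩, let δ = e₁ + e₂, Φ₀ = {α ∈ Φ : ⟨α, δ⟩ = 0}, Φ₁ = {α ∈ Φ : ⟨α, δ⟩ = 1}, and let W₀ be the group generated by the reflections s_α for α ∈ Φ₀. Then W₀ acts transitively on the collection of 4-element subsets S ⊆ Φ₁ consisting of pairwise orthogonal roots. -/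
/-!
Indices are 0-based, so `e₁, e₂` of the paper are `ev 0, ev 1`. Every root of `Φ₁` is
`e_a + ε e_k` with `a ∈ {1, 2}`, `k ≥ 3`, `ε = ±1`, and two such roots `e_a + ε e_k`,
`e_b + η e_m` have inner product `[a = b] + εη [k = m]`. Hence an orthogonal quadruple in `Φ₁`
is `{e₁ ± e_k, e₂ ± e_m}` with `k ≠ m`. For `i, j ≥ 3` the reflection in `e_i - e_j ∈ Φ₀` is
the transposition of the coordinates `i` and `j`, and two such transpositions carry `(k, m)` to
any other admissible pair `(k', m')`.
-/

/-- The standard inner product on `ℚˡ`. -/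
def ip {l : ℕ} (x y : Fin l → ℚ) : ℚ := ∑ i, x i * y i

/-- The standard basis vector `eᵢ` of `ℚˡ`. -/
def ev {l : ℕ} (i : Fin l) : Fin l → ℚ := Pi.single i 1

/-- The root system of type `D_l`: `Φ = {±eᵢ ± eⱼ : i < j}`. -/
def PhiD (l : ℕ) : Set (Fin l → ℚ) :=
  {α | ∃ i j : Fin l, i < j ∧
    (α = ev i + ev j ∨ α = ev i - ev j ∨ α = -ev i + ev j ∨ α = -ev i - ev j)}

/-- The maximal root `δ = e₁ + e₂` of `D_l`. -/
def deltaD (l : ℕ) (hl : 4 ≤ l) : Fin l → ℚ :=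
  ev ⟨0, by omega⟩ + ev ⟨1, by omega⟩

/-- The roots orthogonal to `δ`. -/
def Phi0D (l : ℕ) (hl : 4 ≤ l) : Set (Fin l → ℚ) :=
  {α ∈ PhiD l | ip α (deltaD l hl) = 0}

/-- The roots with `⟨α, δ⟩ = 1`. -/
def Phi1D (l : ℕ) (hl : 4 ≤ l) : Set (Fin l → ℚ) :=
  {α ∈ PhiD l | ip α (deltaD l hl) = 1}

/-- The group `W₀` generated by the reflections `s_α`, `α ∈ Φ₀`. -/
def W0D (l : ℕ) (hl : 4 ≤ l) : Subgroup ((Fin l → ℚ) ≃ₗ[ℚ] (Fin l → ℚ)) :=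
  Subgroup.closure
    {g | ∃ α ∈ Phi0D l hl, ∀ x, g x = x - (2 * ip x α / ip α α) • α}

open Set

section
variable {l : ℕ}

lemma ip_eq_dotProduct (x y : Fin l → ℚ) : ip x y = x ⬝ᵥ y := rfl

lemma ip_deltaD (hl : 4 ≤ l) (x : Fin l → ℚ) :
    ip x (deltaD l hl) = x ⟨0, by omega⟩ + x ⟨1, by omega⟩ := by
  simp [deltaD, ip_eq_dotProduct, dotProduct_add, ev]

lemma ip_ev_add_smul_ev {a b k m : Fin l} (ham : a ≠ m) (hkb : k ≠ b) (ε η : ℚ) :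
    ip (ev a + ε • ev k) (ev b + η • ev m) =
      (if a = b then 1 else 0) + ε * η * (if k = m then 1 else 0) := by
  simp only [ip_eq_dotProduct, ev, dotProduct_add, add_dotProduct, dotProduct_smul,
    smul_dotProduct, single_dotProduct, Pi.single_apply, if_neg ham, if_neg hkb]
  split_ifs <;> simp [mul_comm]

lemma exists_smul_ev_add_smul_ev_of_mem_PhiD {α : Fin l → ℚ} (hα : α ∈ PhiD l) :
    ∃ i j : Fin l, ∃ s t : ℚ, i < j ∧ (s = 1 ∨ s = -1) ∧ (t = 1 ∨ t = -1) ∧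
      α = s • ev i + t • ev j := by
  obtain ⟨i, j, hij, rfl | rfl | rfl | rfl⟩ := hα
  · exact ⟨i, j, 1, 1, hij, by norm_num, by norm_num, by simp⟩
  · exact ⟨i, j, 1, -1, hij, by norm_num, by norm_num, by simp [sub_eq_add_neg]⟩
  · exact ⟨i, j, -1, 1, hij, by norm_num, by norm_num, by simp⟩
  · exact ⟨i, j, -1, -1, hij, by norm_num, by norm_num, by simp [sub_eq_add_neg]⟩

lemma exists_ev_add_smul_ev_of_mem_Phi1D {hl : 4 ≤ l} {α : Fin l → ℚ}
    (hα : α ∈ Phi1D l hl) :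
    ∃ a k : Fin l, ∃ ε : ℚ, a.val < 2 ∧ 2 ≤ k.val ∧ (ε = 1 ∨ ε = -1) ∧
      α = ev a + ε • ev k := by
  obtain ⟨hΦ, hδ⟩ := hα
  obtain ⟨⟨i, hi⟩, ⟨j, hj⟩, s, t, hij, hs, ht, rfl⟩ := exists_smul_ev_add_smul_ev_of_mem_PhiD hΦ
  rw [Fin.mk_lt_mk] at hij
  -- `⟨α, δ⟩` is `s + t ∈ {0, ±2}` if `j < 2` and `0` if `2 ≤ i`, so `i < 2 ≤ j` and it equals `s`
  have hijs : i < 2 ∧ 2 ≤ j ∧ s = 1 := by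
    simp only [ip_deltaD, ev, Pi.add_apply, Pi.smul_apply, Pi.single_apply, Fin.mk.injEq,
      smul_eq_mul, mul_ite, mul_one, mul_zero] at hδ
    split_ifs at hδ <;> first
      | omega
      | exact ⟨by omega, by omega, by linarith⟩
      | (rcases hs with rfl | rfl <;> rcases ht with rfl | rfl <;> norm_num at hδ)
  obtain ⟨hi2, hj2, rfl⟩ := hijs
  exact ⟨⟨i, hi⟩, ⟨j, hj⟩, t, hi2, hj2, ht, by rw [one_smul]⟩

def rootPair (a k : Fin l) : Set (Fin l → ℚ) := {ev a + ev k, ev a - ev k}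

lemma finite_rootPair (a k : Fin l) : (rootPair a k).Finite :=
  toFinite {ev a + ev k, ev a - ev k}

lemma ncard_rootPair_le (a k : Fin l) : (rootPair a k).ncard ≤ 2 :=
  (ncard_insert_le _ _).trans (by rw [ncard_singleton])

lemma image_rootPair {F : Type*} [FunLike F (Fin l → ℚ) (Fin l → ℚ)]
    [AddMonoidHomClass F (Fin l → ℚ) (Fin l → ℚ)] (f : F) {a k a' k' : Fin l}
    (ha : f (ev a) = ev a') (hk : f (ev k) = ev k') : f '' rootPair a k = rootPair a' k' := by
  simp [rootPair, image_pair, map_add, map_sub, ha, hk]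

variable {a b k m : Fin l} {ε η : ℚ}

lemma ev_add_smul_ev_mem_rootPair (hε : ε = 1 ∨ ε = -1) : ev a + ε • ev k ∈ rootPair a k := by
  rcases hε with rfl | rfl <;> simp [rootPair, sub_eq_add_neg]

lemma mem_rootPair_of_eq_or_ip_eq_zero (ha : a.val < 2) (hk : 2 ≤ k.val) (hm : 2 ≤ m.val)
    (hε : ε = 1 ∨ ε = -1) (hη : η = 1 ∨ η = -1)
    (h : ev a + ε • ev k = ev a + η • ev m ∨ ip (ev a + ε • ev k) (ev a + η • ev m) = 0) :
    ev a + η • ev m ∈ rootPair a k := by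
  rcases h with h | h
  · exact h ▸ ev_add_smul_ev_mem_rootPair hε
  have hkm : k = m ∧ η = -ε := by
    rw [ip_ev_add_smul_ev (Fin.ne_of_val_ne (by omega)) (Fin.ne_of_val_ne (by omega))] at h
    by_cases hkm : k = m <;>
      rcases hε with rfl | rfl <;> rcases hη with rfl | rfl <;> simp_all
  obtain ⟨rfl, rfl⟩ := hkm
  exact ev_add_smul_ev_mem_rootPair (by rcases hε with rfl | rfl <;> norm_num)

lemma ne_of_ip_ev_add_smul_ev_eq_zero (ha : a.val < 2) (hb : b.val < 2) (hk : 2 ≤ k.val)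
    (hm : 2 ≤ m.val) (hab : a ≠ b) (hε : ε ≠ 0) (hη : η ≠ 0)
    (h : ip (ev a + ε • ev k) (ev b + η • ev m) = 0) : k ≠ m := by
  rintro rfl
  rw [ip_ev_add_smul_ev (Fin.ne_of_val_ne (by omega)) (Fin.ne_of_val_ne (by omega))] at h
  simp [hab, hε, hη] at h

lemma exists_eq_rootPair_union_rootPair {hl : 4 ≤ l} {S : Set (Fin l → ℚ)}
    (hS : S ⊆ Phi1D l hl) (hcard : S.ncard = 4) (horth : S.Pairwise fun α β => ip α β = 0) :
    ∃ k m : Fin l, 2 ≤ k.val ∧ 2 ≤ m.val ∧ k ≠ m ∧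
      S = rootPair ⟨0, by linarith⟩ k ∪ rootPair ⟨1, by linarith⟩ m := by
  have not_subset_rootPair (a k : Fin l) : ¬ S ⊆ rootPair a k := fun h => by
    have := (ncard_le_ncard h (finite_rootPair a k)).trans (ncard_rootPair_le a k)
    omega
  obtain ⟨x, hx⟩ := nonempty_of_ncard_ne_zero (s := S) (by omega)
  obtain ⟨a, k, ε, ha, hk, hε, rfl⟩ := exists_ev_add_smul_ev_of_mem_Phi1D (hS hx)
  obtain ⟨y, hy, hyk⟩ := not_subset.1 (not_subset_rootPair a k)
  obtain ⟨b, m, η, hb, hm, hη, rfl⟩ := exists_ev_add_smul_ev_of_mem_Phi1D (hS hy)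
  have hab : a ≠ b := by
    rintro rfl
    exact hyk (mem_rootPair_of_eq_or_ip_eq_zero ha hk hm hε hη ((em _).imp_right (horth hx hy)))
  have hkm : k ≠ m :=
    ne_of_ip_ev_add_smul_ev_eq_zero ha hb hk hm hab (by rcases hε with rfl | rfl <;> norm_num)
      (by rcases hη with rfl | rfl <;> norm_num)
      (horth hx hy fun h => hyk (h ▸ ev_add_smul_ev_mem_rootPair hε))
  have hsub : S ⊆ rootPair a k ∪ rootPair b m := by
    intro z hz
    obtain ⟨c, j, ζ, hc, hj, hζ, rfl⟩ := exists_ev_add_smul_ev_of_mem_Phi1D (hS hz)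
    obtain rfl | rfl : c = a ∨ c = b := by simp only [Fin.ext_iff, ne_eq] at hab ⊢; omega
    · exact Or.inl (mem_rootPair_of_eq_or_ip_eq_zero ha hk hj hε hζ
        ((em _).imp_right (horth hx hz)))
    · exact Or.inr (mem_rootPair_of_eq_or_ip_eq_zero hb hm hj hη hζ
        ((em _).imp_right (horth hy hz)))
  have hS_eq : S = rootPair a k ∪ rootPair b m := eq_of_subset_of_ncard_le hsub
    (by linarith [ncard_union_le (rootPair a k) (rootPair b m), ncard_rootPair_le a k,
      ncard_rootPair_le b m]) ((finite_rootPair a k).union (finite_rootPair b m))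
  obtain ⟨rfl, rfl⟩ | ⟨rfl, rfl⟩ :
      (a = ⟨0, by linarith⟩ ∧ b = ⟨1, by linarith⟩) ∨
        (a = ⟨1, by linarith⟩ ∧ b = ⟨0, by linarith⟩) := by
    simp only [Fin.ext_iff, ne_eq] at hab ⊢; omega
  · exact ⟨k, m, hk, hm, hkm, hS_eq⟩
  · exact ⟨m, k, hm, hk, hkm.symm, hS_eq.trans (union_comm _ _)⟩

end

section
variable {l : ℕ}

lemma funCongrLeft_swap_ev (i j t : Fin l) :
    LinearEquiv.funCongrLeft ℚ ℚ (Equiv.swap i j) (ev t) = ev (Equiv.swap i j t) := by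
  simp [ev, LinearMap.funLeft, Pi.single_comp_equiv]

lemma funCongrLeft_swap_eq_reflection {i j : Fin l} (hij : i ≠ j) (x : Fin l → ℚ) :
    LinearEquiv.funCongrLeft ℚ ℚ (Equiv.swap i j) x =
      x - (2 * ip x (ev i - ev j) / ip (ev i - ev j) (ev i - ev j)) • (ev i - ev j) := by
  have hx : ip x (ev i - ev j) = x i - x j := by
    simp [ip_eq_dotProduct, ev, dotProduct_sub]
  have hα : ip (ev i - ev j) (ev i - ev j) = 2 := by
    simp [ip_eq_dotProduct, ev, dotProduct_sub, hij, hij.symm]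
    norm_num
  ext t
  rw [hx, hα]
  by_cases hti : t = i
  · subst hti; simp [ev, hij]
  by_cases htj : t = j
  · subst htj; simp [ev, hij.symm]
  simp [ev, hti, htj, Equiv.swap_apply_of_ne_of_ne hti htj]

lemma ev_sub_ev_mem_Phi0D (hl : 4 ≤ l) {i j : Fin l} (hi : 2 ≤ i.val) (hj : 2 ≤ j.val)
    (hij : i ≠ j) : ev i - ev j ∈ Phi0D l hl := by
  refine ⟨?_, ?_⟩
  · rcases hij.lt_or_gt with h | h
    · exact ⟨i, j, h, Or.inr (Or.inl rfl)⟩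
    · exact ⟨j, i, h, Or.inr (Or.inr (Or.inl (by abel)))⟩
  · simp only [ip_deltaD, ev, Pi.sub_apply, Pi.single_apply, Fin.ext_iff]
    split_ifs <;> first | omega | norm_num

lemma funCongrLeft_swap_mem_W0D (hl : 4 ≤ l) {i j : Fin l} (hi : 2 ≤ i.val) (hj : 2 ≤ j.val) :
    LinearEquiv.funCongrLeft ℚ ℚ (Equiv.swap i j) ∈ W0D l hl := by
  by_cases hij : i = j
  · subst hij
    rw [Equiv.swap_self]
    exact one_mem _
  exact Subgroup.subset_closure
    ⟨ev i - ev j, ev_sub_ev_mem_Phi0D hl hi hj hij, funCongrLeft_swap_eq_reflection hij⟩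

lemma exists_mem_W0D_ev_eq (hl : 4 ≤ l) {k m k' m' : Fin l} (hk : 2 ≤ k.val) (hm : 2 ≤ m.val)
    (hk' : 2 ≤ k'.val) (hm' : 2 ≤ m'.val) (hkm : k ≠ m) (hkm' : k' ≠ m') :
    ∃ w ∈ W0D l hl, (∀ t : Fin l, t.val < 2 → w (ev t) = ev t) ∧
      w (ev k) = ev k' ∧ w (ev m) = ev m' := by
  have hσm : 2 ≤ (Equiv.swap k k' m).val := by
    rw [Equiv.swap_apply_def]
    split_ifs <;> omega
  refine ⟨LinearEquiv.funCongrLeft ℚ ℚ (Equiv.swap (Equiv.swap k k' m) m') *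
      LinearEquiv.funCongrLeft ℚ ℚ (Equiv.swap k k'),
    mul_mem (funCongrLeft_swap_mem_W0D hl hσm hm') (funCongrLeft_swap_mem_W0D hl hk hk'),
    ?_, ?_, ?_⟩ <;> simp only [LinearEquiv.mul_apply, funCongrLeft_swap_ev]
  · intro t ht
    have hσt : Equiv.swap k k' t = t :=
      Equiv.swap_apply_of_ne_of_ne (Fin.ne_of_val_ne (by omega)) (Fin.ne_of_val_ne (by omega))
    rw [hσt, Equiv.swap_apply_of_ne_of_ne (Fin.ne_of_val_ne (by omega))
      (Fin.ne_of_val_ne (by omega))]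
  · have hσm : k' ≠ Equiv.swap k k' m := fun h =>
      hkm ((Equiv.swap k k').injective ((Equiv.swap_apply_left k k').trans h))
    rw [Equiv.swap_apply_left, Equiv.swap_apply_of_ne_of_ne hσm hkm']
  · rw [Equiv.swap_apply_left]

end

/-- `W₀` acts transitively on 4-element subsets of `Φ₁` consisting of
pairwise orthogonal roots. -/
theorem W0_transitive_on_orthogonal_quadruples (l : ℕ) (hl : 4 ≤ l)
    (S T : Set (Fin l → ℚ))
    (hS : S ⊆ Phi1D l hl) (hScard : S.ncard = 4)
    (hSorth : ∀ α ∈ S, ∀ β ∈ S, α ≠ β → ip α β = 0)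
    (hT : T ⊆ Phi1D l hl) (hTcard : T.ncard = 4)
    (hTorth : ∀ α ∈ T, ∀ β ∈ T, α ≠ β → ip α β = 0) :
    ∃ w ∈ W0D l hl, (fun x => w x) '' S = T := by
  obtain ⟨k, m, hk, hm, hkm, rfl⟩ := exists_eq_rootPair_union_rootPair hS hScard hSorth
  obtain ⟨k', m', hk', hm', hkm', rfl⟩ := exists_eq_rootPair_union_rootPair hT hTcard hTorth
  obtain ⟨w, hw, hw_fix, hwk, hwm⟩ := exists_mem_W0D_ev_eq hl hk hm hk' hm' hkm hkm'
  refine ⟨w, hw, ?_⟩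
  rw [image_union, image_rootPair w (hw_fix _ (by simp)) hwk,
    image_rootPair w (hw_fix _ (by simp)) hwm]
end

section
/- Let l ≥ 4. Realize the root system Φ of type D_l concretely as Φ = {±eᵢ ± eⱼ : 1 ≤ i < j ≤ l} ⊂ ℚˡ with the standard inner product ⟨·,·⟩, let δ = e₁ + e₂, Φ₀ = {α ∈ Φ : ⟨α, δ⟩ = 0}, Φ₁ = {α ∈ Φ : ⟨α, δ⟩ = 1}, and let W₀ be the group generated by the reflections s_α for α ∈ Φ₀. Then W₀ acts transitively on the collection of 3-element subsets S ⊆ Φ₁ consisting of pairwise orthogonal roots. -/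
section
variable {l : ℕ}

lemma ip_comm (x y : Fin l → ℚ) : ip x y = ip y x := by
  unfold ip; congr 1; ext t; ring

lemma ip_add_right (x y z : Fin l → ℚ) : ip x (y + z) = ip x y + ip x z := by
  unfold ip; rw [← Finset.sum_add_distrib]; congr 1; ext t; simp [mul_add]

lemma ip_smul_right (c : ℚ) (x y : Fin l → ℚ) : ip x (c • y) = c * ip x y := by
  unfold ip; rw [Finset.mul_sum]; congr 1; ext t; simp; ring

lemma ip_neg_right (x y : Fin l → ℚ) : ip x (-y) = -ip x y := by
  unfold ip; rw [← Finset.sum_neg_distrib]; congr 1; ext t; simp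

lemma ip_sub_right (x y z : Fin l → ℚ) : ip x (y - z) = ip x y - ip x z := by
  rw [sub_eq_add_neg, ip_add_right, ip_neg_right, sub_eq_add_neg]

lemma ip_add_left (x y z : Fin l → ℚ) : ip (x + y) z = ip x z + ip y z := by
  rw [ip_comm, ip_add_right, ip_comm z x, ip_comm z y]

lemma ip_smul_left (c : ℚ) (x y : Fin l → ℚ) : ip (c • x) y = c * ip x y := by
  rw [ip_comm, ip_smul_right, ip_comm]

lemma ip_neg_left (x y : Fin l → ℚ) : ip (-x) y = -ip x y := by
  rw [ip_comm, ip_neg_right, ip_comm]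

lemma ip_sub_left (x y z : Fin l → ℚ) : ip (x - y) z = ip x z - ip y z := by
  rw [ip_comm, ip_sub_right, ip_comm z x, ip_comm z y]

lemma ip_ev_right (x : Fin l → ℚ) (j : Fin l) : ip x (ev j) = x j := by
  unfold ip ev
  simp [Pi.single_apply, mul_ite, Finset.sum_ite_eq']

lemma ip_ev_left (x : Fin l → ℚ) (j : Fin l) : ip (ev j) x = x j := by
  rw [ip_comm, ip_ev_right]

lemma ip_ev_ev (i j : Fin l) : ip (ev i) (ev j) = if i = j then 1 else 0 := by
  rw [ip_ev_right]; unfold ev; simp [Pi.single_apply, eq_comm]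

lemma ev_apply (i t : Fin l) : ev i t = if t = i then 1 else 0 := by
  simp [ev, Pi.single_apply]
end


section gens
variable {l : ℕ}

/-- swap coordinates i and j -/
def swapE (i j : Fin l) : (Fin l → ℚ) ≃ₗ[ℚ] (Fin l → ℚ) where
  toFun x := x ∘ Equiv.swap i j
  invFun x := x ∘ Equiv.swap i j
  map_add' x y := rfl
  map_smul' c x := rfl
  left_inv x := by funext t; simp
  right_inv x := by funext t; simp

/-- negate-and-swap coordinates i and j -/
def negE (i j : Fin l) : (Fin l → ℚ) ≃ₗ[ℚ] (Fin l → ℚ) where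
  toFun x := fun t => if t = i then -x j else if t = j then -x i else x t
  invFun x := fun t => if t = i then -x j else if t = j then -x i else x t
  map_add' x y := by
    funext t
    by_cases h : t = i <;> by_cases h' : t = j <;> by_cases hij : j = i <;>
      simp [h, h', hij, add_comm]
  map_smul' c x := by
    funext t
    by_cases h : t = i <;> by_cases h' : t = j <;> simp [h, h', mul_comm]
  left_inv x := by
    funext t
    by_cases h : t = i <;> by_cases h' : t = j <;>
      by_cases hij : j = i <;> simp [h, h', hij]
  right_inv x := by
    funext t
    by_cases h : t = i <;> by_cases h' : t = j <;>
      by_cases hij : j = i <;> simp [h, h', hij]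

lemma swapE_apply (i j : Fin l) (x : Fin l → ℚ) (t : Fin l) :
    swapE i j x t = x (Equiv.swap i j t) := rfl

lemma negE_apply (i j : Fin l) (x : Fin l → ℚ) (t : Fin l) :
    negE i j x t = if t = i then -x j else if t = j then -x i else x t := rfl

lemma swapE_ev (i j a : Fin l) : swapE i j (ev a) = ev (Equiv.swap i j a) := by
  funext t
  rw [swapE_apply, ev_apply, ev_apply]
  have : ((Equiv.swap i j) t = a) ↔ (t = (Equiv.swap i j) a) := by
    constructor
    · intro h; rw [← h]; simp
    · intro h; rw [h]; simp
  simp [this]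

lemma negE_ev_left (i j : Fin l) (hij : i ≠ j) : negE i j (ev i) = -ev j := by
  funext t
  rw [negE_apply]
  by_cases h : t = i <;> by_cases h' : t = j <;>
    simp [h, h', ev_apply, hij, Ne.symm hij]

lemma negE_ev_right (i j : Fin l) (hij : i ≠ j) : negE i j (ev j) = -ev i := by
  funext t
  rw [negE_apply]
  by_cases h : t = i <;> by_cases h' : t = j <;>
    simp [h, h', ev_apply, hij, Ne.symm hij]

lemma negE_ev_other (i j a : Fin l) (hai : a ≠ i) (haj : a ≠ j) :
    negE i j (ev a) = ev a := by
  funext t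
  rw [negE_apply]
  by_cases h : t = i <;> by_cases h' : t = j <;>
    simp [h, h', ev_apply, hai, haj, Ne.symm hai, Ne.symm haj]
end gens

section mem
variable {l : ℕ} (hl : 4 ≤ l)

lemma ip_delta (x : Fin l → ℚ) :
    ip x (deltaD l hl) = x ⟨0, by omega⟩ + x ⟨1, by omega⟩ := by
  unfold deltaD
  rw [ip_add_right, ip_ev_right, ip_ev_right]

lemma ev_ne (i j : Fin l) (h : i.val ≠ j.val) : (ev i : Fin l → ℚ) ≠ ev j := by
  intro he
  have := congrFun he i
  rw [ev_apply, ev_apply] at this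
  simp [Fin.ext_iff, h] at this

lemma sub_root_mem_Phi0 (i j : Fin l) (hij : i ≠ j)
    (h : (2 ≤ i.val ∧ 2 ≤ j.val) ∨ (i.val ≤ 1 ∧ j.val ≤ 1)) :
    ev i - ev j ∈ Phi0D l hl := by
  constructor
  · rcases lt_or_gt_of_ne hij with hlt | hgt
    · exact ⟨i, j, hlt, Or.inr (Or.inl rfl)⟩
    · exact ⟨j, i, hgt, Or.inr (Or.inr (Or.inl (by abel)))⟩
  · rw [ip_delta hl]
    simp only [Pi.sub_apply, ev_apply]
    simp only [Pi.sub_apply, ev_apply, Fin.ext_iff]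
    split_ifs <;> simp_all <;> omega

lemma add_root_mem_Phi0 (i j : Fin l) (hij : i ≠ j)
    (h1 : 2 ≤ i.val) (h2 : 2 ≤ j.val) :
    ev i + ev j ∈ Phi0D l hl := by
  constructor
  · rcases lt_or_gt_of_ne hij with hlt | hgt
    · exact ⟨i, j, hlt, Or.inl rfl⟩
    · exact ⟨j, i, hgt, Or.inl (by abel)⟩
  · rw [ip_delta hl]
    simp only [Pi.add_apply, ev_apply, Fin.ext_iff]
    split_ifs <;> simp_all <;> omega

lemma refl_mem_W0 (α : Fin l → ℚ) (hα : α ∈ Phi0D l hl)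
    (g : (Fin l → ℚ) ≃ₗ[ℚ] (Fin l → ℚ))
    (hg : ∀ x, g x = x - (2 * ip x α / ip α α) • α) : g ∈ W0D l hl :=
  Subgroup.subset_closure ⟨α, hα, hg⟩

lemma ip_sub_self (i j : Fin l) (hij : i ≠ j) :
    ip (ev i - ev j : Fin l → ℚ) (ev i - ev j) = 2 := by
  rw [ip_sub_left, ip_sub_right, ip_sub_right, ip_ev_ev, ip_ev_ev, ip_ev_ev, ip_ev_ev]
  simp [hij, Ne.symm hij]
  norm_num

lemma ip_add_self (i j : Fin l) (hij : i ≠ j) :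
    ip (ev i + ev j : Fin l → ℚ) (ev i + ev j) = 2 := by
  rw [ip_add_left, ip_add_right, ip_add_right, ip_ev_ev, ip_ev_ev, ip_ev_ev, ip_ev_ev]
  simp [hij, Ne.symm hij]
  norm_num

lemma swapE_mem (i j : Fin l) (hij : i ≠ j)
    (h : (2 ≤ i.val ∧ 2 ≤ j.val) ∨ (i.val ≤ 1 ∧ j.val ≤ 1)) :
    swapE i j ∈ W0D l hl := by
  apply refl_mem_W0 hl (ev i - ev j) (sub_root_mem_Phi0 hl i j hij h)
  intro x
  funext t
  rw [swapE_apply, ip_sub_self i j hij]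
  have hx : ip x (ev i - ev j) = x i - x j := by
    rw [ip_sub_right, ip_ev_right, ip_ev_right]
  rw [hx]
  simp only [Pi.sub_apply, Pi.smul_apply, Pi.sub_apply, ev_apply, smul_eq_mul]
  by_cases h1 : t = i <;> by_cases h2 : t = j <;>
    simp [h1, h2, hij, Ne.symm hij, Equiv.swap_apply_of_ne_of_ne] <;> ring

lemma negE_mem (i j : Fin l) (hij : i ≠ j) (h1 : 2 ≤ i.val) (h2 : 2 ≤ j.val) :
    negE i j ∈ W0D l hl := by
  apply refl_mem_W0 hl (ev i + ev j) (add_root_mem_Phi0 hl i j hij h1 h2)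
  intro x
  funext t
  rw [negE_apply, ip_add_self i j hij]
  have hx : ip x (ev i + ev j) = x i + x j := by
    rw [ip_add_right, ip_ev_right, ip_ev_right]
  rw [hx]
  simp only [Pi.sub_apply, Pi.smul_apply, Pi.add_apply, ev_apply, smul_eq_mul]
  by_cases ha : t = i <;> by_cases hb : t = j <;>
    simp [ha, hb, hij, Ne.symm hij] <;> ring
end mem

section classify
variable {l : ℕ} (hl : 4 ≤ l)

lemma mem_Phi1_iff (α : Fin l → ℚ) :
    α ∈ Phi1D l hl ↔ ∃ (a k : Fin l) (ε : ℚ), a.val ≤ 1 ∧ 2 ≤ k.val ∧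
      (ε = 1 ∨ ε = -1) ∧ α = ev a + ε • ev k := by
  constructor
  · rintro ⟨⟨i, j, hij, hform⟩, hip⟩
    rw [ip_delta hl] at hip
    have hij' : i.val < j.val := hij
    by_cases hj2 : 2 ≤ j.val
    case pos =>
      by_cases hi1 : i.val ≤ 1
      case pos =>
        rcases hform with h | h | h | h
        · exact ⟨i, j, 1, hi1, hj2, Or.inl rfl, by rw [one_smul]; exact h⟩
        · refine ⟨i, j, -1, hi1, hj2, Or.inr rfl, ?_⟩
          rw [h, neg_one_smul]; abel
        · exfalso
          rw [h] at hip
          simp only [Pi.add_apply, Pi.neg_apply, ev_apply, Fin.ext_iff] at hip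
          split_ifs at hip <;> first | omega | norm_num at hip
        · exfalso
          rw [h] at hip
          simp only [Pi.sub_apply, Pi.neg_apply, ev_apply, Fin.ext_iff] at hip
          split_ifs at hip <;> first | omega | norm_num at hip
      case neg =>
        push_neg at hi1
        exfalso
        rcases hform with h | h | h | h <;> rw [h] at hip <;>
          simp only [Pi.add_apply, Pi.sub_apply, Pi.neg_apply, ev_apply, Fin.ext_iff] at hip <;>
          split_ifs at hip <;> first | omega | norm_num at hip
    case neg =>
      push_neg at hj2
      exfalso
      rcases hform with h | h | h | h <;> rw [h] at hip <;>
        simp only [Pi.add_apply, Pi.sub_apply, Pi.neg_apply, ev_apply, Fin.ext_iff] at hip <;>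
        split_ifs at hip <;> first | omega | norm_num at hip
  · rintro ⟨a, k, ε, ha, hk, hε, rfl⟩
    have hak : a < k := by rw [Fin.lt_def]; omega
    constructor
    · refine ⟨a, k, hak, ?_⟩
      rcases hε with rfl | rfl
      · left; rw [one_smul]
      · right; left; rw [neg_one_smul]; abel
    · rw [ip_delta hl]
      simp only [Pi.add_apply, Pi.smul_apply, ev_apply, Fin.ext_iff, smul_eq_mul]
      split_ifs <;> first | (norm_num; omega) | omega | norm_num
end classify

section classify2
variable {l : ℕ} (hl : 4 ≤ l)

lemma ip_form (a b k m : Fin l) (ha : a.val ≤ 1) (hb : b.val ≤ 1)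
    (hk : 2 ≤ k.val) (hm : 2 ≤ m.val) (ε ζ : ℚ) :
    ip (ev a + ε • ev k) (ev b + ζ • ev m) =
      (if a = b then 1 else 0) + ε * ζ * (if k = m then 1 else 0) := by
  have hab : a ≠ m := by intro h; rw [h] at ha; omega
  have hkb : k ≠ b := by intro h; rw [h] at hk; omega
  rw [ip_add_left, ip_add_right, ip_add_right, ip_smul_left, ip_smul_right,
    ip_smul_right, ip_smul_left, ip_ev_ev, ip_ev_ev, ip_ev_ev, ip_ev_ev]
  simp [hab, hkb]
  ring

lemma eq_form_iff (a b k m : Fin l) (ha : a.val ≤ 1) (hb : b.val ≤ 1)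
    (hk : 2 ≤ k.val) (hm : 2 ≤ m.val) (ε ζ : ℚ)
    (hε : ε = 1 ∨ ε = -1) (hζ : ζ = 1 ∨ ζ = -1) :
    (ev a + ε • ev k : Fin l → ℚ) = ev b + ζ • ev m ↔ (a = b ∧ k = m ∧ ε = ζ) := by
  constructor
  · intro h
    have h1 := congrFun h a
    have h2 := congrFun h k
    have h3 := congrFun h b
    have h4 := congrFun h m
    have hak : a ≠ k := by intro hh; rw [hh] at ha; omega
    have hbm : b ≠ m := by intro hh; rw [hh] at hb; omega
    have ham : a ≠ m := by intro hh; rw [hh] at ha; omega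
    have hbk : b ≠ k := by intro hh; rw [hh] at hb; omega
    simp only [Pi.add_apply, Pi.smul_apply, ev_apply, smul_eq_mul] at h1 h2 h3 h4
    by_cases hab : a = b <;> by_cases hkm : k = m <;>
      rcases hε with rfl | rfl <;> rcases hζ with rfl | rfl <;>
      simp [hab, hkm, hak, hbm, ham, hbk, Ne.symm hak, Ne.symm hbm,
        Ne.symm ham, Ne.symm hbk, eq_comm] at h1 h2 h3 h4 ⊢ <;> tauto
  · rintro ⟨rfl, rfl, rfl⟩; rfl

lemma orth_form (a b k m : Fin l) (ha : a.val ≤ 1) (hb : b.val ≤ 1)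
    (hk : 2 ≤ k.val) (hm : 2 ≤ m.val) (ε ζ : ℚ)
    (hε : ε = 1 ∨ ε = -1) (hζ : ζ = 1 ∨ ζ = -1)
    (horth : ip (ev a + ε • ev k) (ev b + ζ • ev m) = 0) :
    (a = b ∧ k = m ∧ ζ = -ε) ∨ (a ≠ b ∧ k ≠ m) := by
  rw [ip_form a b k m ha hb hk hm] at horth
  by_cases hab : a = b <;> by_cases hkm : k = m <;>
    rcases hε with rfl | rfl <;> rcases hζ with rfl | rfl <;>
    simp [hab, hkm] at horth ⊢ <;> tauto

end classify2

section classify3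
variable {l : ℕ} (hl : 4 ≤ l)

lemma classify_triple (S : Set (Fin l → ℚ)) (hS : S ⊆ Phi1D l hl)
    (h3 : S.ncard = 3)
    (horth : ∀ α ∈ S, ∀ β ∈ S, α ≠ β → ip α β = 0) :
    ∃ (a c k n : Fin l) (η : ℚ), a.val ≤ 1 ∧ c.val ≤ 1 ∧ a ≠ c ∧
      2 ≤ k.val ∧ 2 ≤ n.val ∧ k ≠ n ∧ (η = 1 ∨ η = -1) ∧
      S = {ev a + ev k, ev a - ev k, ev c + η • ev n} := by
  obtain ⟨α, β, γ, hαβ, hαγ, hβγ, rfl⟩ := Set.ncard_eq_three.mp h3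
  have hαm : α ∈ Phi1D l hl := hS (by simp)
  have hβm : β ∈ Phi1D l hl := hS (by simp)
  have hγm : γ ∈ Phi1D l hl := hS (by simp)
  obtain ⟨a, k, ε, ha, hk, hε, rfl⟩ := (mem_Phi1_iff hl α).mp hαm
  obtain ⟨b, m, ζ, hb, hm, hζ, rfl⟩ := (mem_Phi1_iff hl β).mp hβm
  obtain ⟨c, n, η, hc, hn, hη, rfl⟩ := (mem_Phi1_iff hl γ).mp hγm
  have oab := orth_form a b k m ha hb hk hm ε ζ hε hζ
    (horth _ (by simp) _ (by simp) hαβ)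
  have oac := orth_form a c k n ha hc hk hn ε η hε hη
    (horth _ (by simp) _ (by simp) hαγ)
  have obc := orth_form b c m n hb hc hm hn ζ η hζ hη
    (horth _ (by simp) _ (by simp) hβγ)
  by_cases hab : a = b
  · -- α, β form the pair
    rcases oab with ⟨-, hkm, hζε⟩ | ⟨hab', -⟩
    · subst hab hkm hζε
      have hac : a ≠ c := by
        intro h
        subst h
        rcases oac with ⟨-, -, hηε⟩ | ⟨hac', -⟩
        · rcases obc with ⟨-, -, hηζ⟩ | ⟨hbc', -⟩
          · rw [hηε] at hηζ
            rcases hε with rfl | rfl <;> norm_num at hηζ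
          · exact hbc' rfl
        · exact hac' rfl
      have hkn : k ≠ n := by
        rcases oac with ⟨h', -, -⟩ | ⟨-, h'⟩
        · exact absurd h' hac
        · exact h'
      refine ⟨a, c, k, n, η, ha, hc, hac, hk, hn, hkn, hη, ?_⟩
      rcases hε with rfl | rfl
      · simp only [one_smul, neg_one_smul, neg_neg, ← sub_eq_add_neg]
      · simp only [one_smul, neg_one_smul, neg_neg, ← sub_eq_add_neg]
        rw [Set.insert_comm]
    · exact absurd hab hab'
  · by_cases hac : a = c
    · -- α, γ form the pair
      rcases oac with ⟨-, hkn, hηε⟩ | ⟨hac', -⟩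
      · subst hac hkn hηε
        have hkm : k ≠ m := by
          rcases oab with ⟨h', -, -⟩ | ⟨-, h'⟩
          · exact absurd h' hab
          · exact h'
        refine ⟨a, b, k, m, ζ, ha, hb, hab, hk, hm, hkm, hζ, ?_⟩
        rcases hε with rfl | rfl
        · simp only [one_smul, neg_one_smul, neg_neg, ← sub_eq_add_neg]
          rw [Set.pair_comm (ev b + ζ • ev m) (ev a - ev k)]
        · simp only [one_smul, neg_one_smul, neg_neg, ← sub_eq_add_neg]
          rw [Set.pair_comm (ev b + ζ • ev m) (ev a + ev k), Set.insert_comm]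
      · exact absurd hac hac'
    · -- b = c, β, γ form the pair
      have hbc : b = c := by
        have := Fin.ext_iff.not.mp hab
        have := Fin.ext_iff.not.mp hac
        rw [Fin.ext_iff]
        omega
      rcases obc with ⟨-, hmn, hηζ⟩ | ⟨hbc', -⟩
      · subst hbc hmn hηζ
        have hmk : m ≠ k := by
          rcases oab with ⟨h', -, -⟩ | ⟨-, h'⟩
          · exact absurd h' hab
          · exact Ne.symm h'
        refine ⟨b, a, m, k, ε, hb, ha, fun h => hab h.symm, hm, hk, hmk, hε, ?_⟩
        rcases hζ with rfl | rfl
        · simp only [one_smul, neg_one_smul, neg_neg, ← sub_eq_add_neg]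
          rw [Set.insert_comm (ev a + ε • ev k) (ev b + ev m),
            Set.pair_comm (ev a + ε • ev k) (ev b - ev m)]
        · simp only [one_smul, neg_one_smul, neg_neg, ← sub_eq_add_neg]
          rw [Set.insert_comm (ev a + ε • ev k) (ev b - ev m),
            Set.pair_comm (ev a + ε • ev k) (ev b + ev m), Set.insert_comm]
      · exact absurd hbc hbc'
end classify3

section reduce
variable {l : ℕ}

def canonT (l : ℕ) (hl : 4 ≤ l) : Set (Fin l → ℚ) :=
  {ev ⟨0, by omega⟩ + ev ⟨2, by omega⟩, ev ⟨0, by omega⟩ - ev ⟨2, by omega⟩,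
    ev ⟨1, by omega⟩ + ev ⟨3, by omega⟩}

lemma image_triple (g : (Fin l → ℚ) ≃ₗ[ℚ] (Fin l → ℚ)) (x y z : Fin l → ℚ) :
    (fun v => g v) '' {x, y, z} = {g x, g y, g z} := by
  simp [Set.image_insert_eq]

lemma step (hl : 4 ≤ l) (S T : Set (Fin l → ℚ))
    (g : (Fin l → ℚ) ≃ₗ[ℚ] (Fin l → ℚ)) (hg : g ∈ W0D l hl)
    (h : ∃ w ∈ W0D l hl, (fun x => w x) '' ((fun x => g x) '' S) = T) :
    ∃ w ∈ W0D l hl, (fun x => w x) '' S = T := by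
  obtain ⟨w, hw, himg⟩ := h
  refine ⟨w * g, mul_mem hw hg, ?_⟩
  rw [← himg, Set.image_image]
  rfl

lemma reduce_final (hl : 4 ≤ l) (η : ℚ) (hη : η = 1 ∨ η = -1) :
    ∃ w ∈ W0D l hl, (fun x => w x) ''
      {ev ⟨0, by omega⟩ + ev ⟨2, by omega⟩, ev ⟨0, by omega⟩ - ev ⟨2, by omega⟩,
        ev ⟨1, by omega⟩ + η • ev ⟨3, by omega⟩} = canonT l hl := by
  have h23 : (⟨2, by omega⟩ : Fin l) ≠ ⟨3, by omega⟩ := by simp [Fin.ext_iff]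
  have h02 : (⟨0, by omega⟩ : Fin l) ≠ ⟨2, by omega⟩ := by simp [Fin.ext_iff]
  have h03 : (⟨0, by omega⟩ : Fin l) ≠ ⟨3, by omega⟩ := by simp [Fin.ext_iff]
  have h12 : (⟨1, by omega⟩ : Fin l) ≠ ⟨2, by omega⟩ := by simp [Fin.ext_iff]
  have h13 : (⟨1, by omega⟩ : Fin l) ≠ ⟨3, by omega⟩ := by simp [Fin.ext_iff]
  rcases hη with rfl | rfl
  · exact ⟨1, one_mem _, by rw [one_smul]; simp [canonT]⟩
  · apply step hl _ _ (negE ⟨2, by omega⟩ ⟨3, by omega⟩)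
      (negE_mem hl _ _ h23 (by norm_num) (by norm_num))
    rw [image_triple]
    have e1 : negE (⟨2, by omega⟩ : Fin l) ⟨3, by omega⟩ (ev ⟨0, by omega⟩ + ev ⟨2, by omega⟩)
        = ev ⟨0, by omega⟩ - ev ⟨3, by omega⟩ := by
      rw [map_add, negE_ev_other _ _ _ h02 h03, negE_ev_left _ _ h23, ← sub_eq_add_neg]
    have e2 : negE (⟨2, by omega⟩ : Fin l) ⟨3, by omega⟩ (ev ⟨0, by omega⟩ - ev ⟨2, by omega⟩)
        = ev ⟨0, by omega⟩ + ev ⟨3, by omega⟩ := by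
      rw [map_sub, negE_ev_other _ _ _ h02 h03, negE_ev_left _ _ h23, sub_neg_eq_add]
    have e3 : negE (⟨2, by omega⟩ : Fin l) ⟨3, by omega⟩
          (ev ⟨1, by omega⟩ + (-1 : ℚ) • ev ⟨3, by omega⟩)
        = ev ⟨1, by omega⟩ + ev ⟨2, by omega⟩ := by
      rw [map_add, map_smul, negE_ev_other _ _ _ h12 h13, negE_ev_right _ _ h23]
      rw [neg_one_smul, neg_neg]
    rw [e1, e2, e3]
    apply step hl _ _ (swapE ⟨2, by omega⟩ ⟨3, by omega⟩)
      (swapE_mem hl _ _ h23 (Or.inl (by constructor <;> norm_num)))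
    rw [image_triple]
    have f1 : swapE (⟨2, by omega⟩ : Fin l) ⟨3, by omega⟩ (ev ⟨0, by omega⟩ - ev ⟨3, by omega⟩)
        = ev ⟨0, by omega⟩ - ev ⟨2, by omega⟩ := by
      rw [map_sub, swapE_ev, swapE_ev, Equiv.swap_apply_of_ne_of_ne h02 h03,
        Equiv.swap_apply_right]
    have f2 : swapE (⟨2, by omega⟩ : Fin l) ⟨3, by omega⟩ (ev ⟨0, by omega⟩ + ev ⟨3, by omega⟩)
        = ev ⟨0, by omega⟩ + ev ⟨2, by omega⟩ := by
      rw [map_add, swapE_ev, swapE_ev, Equiv.swap_apply_of_ne_of_ne h02 h03,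
        Equiv.swap_apply_right]
    have f3 : swapE (⟨2, by omega⟩ : Fin l) ⟨3, by omega⟩ (ev ⟨1, by omega⟩ + ev ⟨2, by omega⟩)
        = ev ⟨1, by omega⟩ + ev ⟨3, by omega⟩ := by
      rw [map_add, swapE_ev, swapE_ev, Equiv.swap_apply_of_ne_of_ne h12 h13,
        Equiv.swap_apply_left]
    rw [f1, f2, f3]
    refine ⟨1, one_mem _, ?_⟩
    have : (fun x => (1 : (Fin l → ℚ) ≃ₗ[ℚ] (Fin l → ℚ)) x) = id := rfl
    rw [this, Set.image_id, canonT]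
    ext x
    simp only [Set.mem_insert_iff, Set.mem_singleton_iff]
    tauto
end reduce

section reduce2
variable {l : ℕ}

lemma reduce_n (hl : 4 ≤ l) (n : Fin l) (hn : 2 ≤ n.val) (hnI2 : n ≠ ⟨2, by omega⟩)
    (η : ℚ) (hη : η = 1 ∨ η = -1) :
    ∃ w ∈ W0D l hl, (fun x => w x) ''
      {ev ⟨0, by omega⟩ + ev ⟨2, by omega⟩, ev ⟨0, by omega⟩ - ev ⟨2, by omega⟩,
        ev ⟨1, by omega⟩ + η • ev n} = canonT l hl := by
  by_cases hnI3 : n = ⟨3, by omega⟩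
  · rw [hnI3]
    exact reduce_final hl η hη
  · apply step hl _ _ (swapE n ⟨3, by omega⟩)
      (swapE_mem hl _ _ hnI3 (Or.inl ⟨hn, by norm_num⟩))
    rw [image_triple]
    have h0n : (⟨0, by omega⟩ : Fin l) ≠ n := by simp [Fin.ext_iff]; omega
    have h03 : (⟨0, by omega⟩ : Fin l) ≠ ⟨3, by omega⟩ := by simp [Fin.ext_iff]
    have h1n : (⟨1, by omega⟩ : Fin l) ≠ n := by simp [Fin.ext_iff]; omega
    have h13 : (⟨1, by omega⟩ : Fin l) ≠ ⟨3, by omega⟩ := by simp [Fin.ext_iff]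
    have h2n : (⟨2, by omega⟩ : Fin l) ≠ n := Ne.symm hnI2
    have h23 : (⟨2, by omega⟩ : Fin l) ≠ ⟨3, by omega⟩ := by simp [Fin.ext_iff]
    have e1 : swapE n (⟨3, by omega⟩ : Fin l) (ev ⟨0, by omega⟩ + ev ⟨2, by omega⟩)
        = ev ⟨0, by omega⟩ + ev ⟨2, by omega⟩ := by
      rw [map_add, swapE_ev, swapE_ev, Equiv.swap_apply_of_ne_of_ne h0n h03,
        Equiv.swap_apply_of_ne_of_ne h2n h23]
    have e2 : swapE n (⟨3, by omega⟩ : Fin l) (ev ⟨0, by omega⟩ - ev ⟨2, by omega⟩)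
        = ev ⟨0, by omega⟩ - ev ⟨2, by omega⟩ := by
      rw [map_sub, swapE_ev, swapE_ev, Equiv.swap_apply_of_ne_of_ne h0n h03,
        Equiv.swap_apply_of_ne_of_ne h2n h23]
    have e3 : swapE n (⟨3, by omega⟩ : Fin l) (ev ⟨1, by omega⟩ + η • ev n)
        = ev ⟨1, by omega⟩ + η • ev ⟨3, by omega⟩ := by
      rw [map_add, map_smul, swapE_ev, swapE_ev, Equiv.swap_apply_of_ne_of_ne h1n h13,
        Equiv.swap_apply_left]
    rw [e1, e2, e3]
    exact reduce_final hl η hη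

lemma reduce_kn (hl : 4 ≤ l) (k n : Fin l) (hk : 2 ≤ k.val) (hn : 2 ≤ n.val)
    (hkn : k ≠ n) (η : ℚ) (hη : η = 1 ∨ η = -1) :
    ∃ w ∈ W0D l hl, (fun x => w x) ''
      {ev ⟨0, by omega⟩ + ev k, ev ⟨0, by omega⟩ - ev k,
        ev ⟨1, by omega⟩ + η • ev n} = canonT l hl := by
  by_cases hkI2 : k = ⟨2, by omega⟩
  · have hn2 : n ≠ ⟨2, by omega⟩ := by rw [← hkI2]; exact Ne.symm hkn
    rw [hkI2]
    exact reduce_n hl n hn hn2 η hη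
  · apply step hl _ _ (swapE k ⟨2, by omega⟩)
      (swapE_mem hl _ _ hkI2 (Or.inl ⟨hk, by norm_num⟩))
    rw [image_triple]
    have h0k : (⟨0, by omega⟩ : Fin l) ≠ k := by simp [Fin.ext_iff]; omega
    have h02 : (⟨0, by omega⟩ : Fin l) ≠ ⟨2, by omega⟩ := by simp [Fin.ext_iff]
    have h1k : (⟨1, by omega⟩ : Fin l) ≠ k := by simp [Fin.ext_iff]; omega
    have h12 : (⟨1, by omega⟩ : Fin l) ≠ ⟨2, by omega⟩ := by simp [Fin.ext_iff]
    have e1 : swapE k (⟨2, by omega⟩ : Fin l) (ev ⟨0, by omega⟩ + ev k)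
        = ev ⟨0, by omega⟩ + ev ⟨2, by omega⟩ := by
      rw [map_add, swapE_ev, swapE_ev, Equiv.swap_apply_of_ne_of_ne h0k h02,
        Equiv.swap_apply_left]
    have e2 : swapE k (⟨2, by omega⟩ : Fin l) (ev ⟨0, by omega⟩ - ev k)
        = ev ⟨0, by omega⟩ - ev ⟨2, by omega⟩ := by
      rw [map_sub, swapE_ev, swapE_ev, Equiv.swap_apply_of_ne_of_ne h0k h02,
        Equiv.swap_apply_left]
    rw [e1, e2]
    by_cases hnI2 : n = ⟨2, by omega⟩
    · rw [hnI2]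
      have e3 : swapE k (⟨2, by omega⟩ : Fin l) (ev ⟨1, by omega⟩ + η • ev ⟨2, by omega⟩)
          = ev ⟨1, by omega⟩ + η • ev k := by
        rw [map_add, map_smul, swapE_ev, swapE_ev, Equiv.swap_apply_of_ne_of_ne h1k h12,
          Equiv.swap_apply_right]
      rw [e3]
      exact reduce_n hl k hk hkI2 η hη
    · have e3 : swapE k (⟨2, by omega⟩ : Fin l) (ev ⟨1, by omega⟩ + η • ev n)
          = ev ⟨1, by omega⟩ + η • ev n := by
        rw [map_add, map_smul, swapE_ev, swapE_ev, Equiv.swap_apply_of_ne_of_ne h1k h12,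
          Equiv.swap_apply_of_ne_of_ne (Ne.symm hkn) hnI2]
      rw [e3]
      exact reduce_n hl n hn hnI2 η hη

set_option maxHeartbeats 1000000 in
lemma reduce_all (hl : 4 ≤ l) (a c k n : Fin l) (η : ℚ) (ha : a.val ≤ 1) (hc : c.val ≤ 1)
    (hac : a ≠ c) (hk : 2 ≤ k.val) (hn : 2 ≤ n.val) (hkn : k ≠ n)
    (hη : η = 1 ∨ η = -1) :
    ∃ w ∈ W0D l hl, (fun x => w x) ''
      {ev a + ev k, ev a - ev k, ev c + η • ev n} = canonT l hl := by
  have hac' : a.val ≠ c.val := fun h => hac (Fin.ext h)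
  by_cases ha0 : a = ⟨0, by omega⟩
  · have hc1 : c = ⟨1, by omega⟩ := by
      simp [Fin.ext_iff] at ha0 ⊢; omega
    rw [ha0, hc1]
    exact reduce_kn hl k n hk hn hkn η hη
  · have ha1 : a = ⟨1, by omega⟩ := by simp [Fin.ext_iff] at ha0 ⊢; omega
    have hc0 : c = ⟨0, by omega⟩ := by
      simp [Fin.ext_iff] at ha1 ⊢; omega
    rw [ha1, hc0]
    apply step hl _ _ (swapE ⟨0, by omega⟩ ⟨1, by omega⟩)
      (swapE_mem hl _ _ (by simp [Fin.ext_iff]) (Or.inr (by norm_num)))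
    rw [image_triple]
    have h01 : (⟨0, by omega⟩ : Fin l) ≠ ⟨1, by omega⟩ := by simp [Fin.ext_iff]
    have hk0 : k ≠ ⟨0, by omega⟩ := by simp [Fin.ext_iff]; omega
    have hk1 : k ≠ ⟨1, by omega⟩ := by simp [Fin.ext_iff]; omega
    have hn0 : n ≠ ⟨0, by omega⟩ := by simp [Fin.ext_iff]; omega
    have hn1 : n ≠ ⟨1, by omega⟩ := by simp [Fin.ext_iff]; omega
    have e1 : swapE (⟨0, by omega⟩ : Fin l) ⟨1, by omega⟩ (ev ⟨1, by omega⟩ + ev k)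
        = ev ⟨0, by omega⟩ + ev k := by
      rw [map_add, swapE_ev, swapE_ev, Equiv.swap_apply_right,
        Equiv.swap_apply_of_ne_of_ne hk0 hk1]
    have e2 : swapE (⟨0, by omega⟩ : Fin l) ⟨1, by omega⟩ (ev ⟨1, by omega⟩ - ev k)
        = ev ⟨0, by omega⟩ - ev k := by
      rw [map_sub, swapE_ev, swapE_ev, Equiv.swap_apply_right,
        Equiv.swap_apply_of_ne_of_ne hk0 hk1]
    have e3 : swapE (⟨0, by omega⟩ : Fin l) ⟨1, by omega⟩ (ev ⟨0, by omega⟩ + η • ev n)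
        = ev ⟨1, by omega⟩ + η • ev n := by
      rw [map_add, map_smul, swapE_ev, swapE_ev, Equiv.swap_apply_left,
        Equiv.swap_apply_of_ne_of_ne hn0 hn1]
    rw [e1, e2, e3]
    exact reduce_kn hl k n hk hn hkn η hη
end reduce2

/-- `W₀` acts transitively on 3-element subsets of `Φ₁` consisting of
pairwise orthogonal roots. -/
theorem W0_transitive_on_orthogonal_triples (l : ℕ) (hl : 4 ≤ l)
    (S T : Set (Fin l → ℚ))
    (hS : S ⊆ Phi1D l hl) (hScard : S.ncard = 3)
    (hSorth : ∀ α ∈ S, ∀ β ∈ S, α ≠ β → ip α β = 0)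
    (hT : T ⊆ Phi1D l hl) (hTcard : T.ncard = 3)
    (hTorth : ∀ α ∈ T, ∀ β ∈ T, α ≠ β → ip α β = 0) :
    ∃ w ∈ W0D l hl, (fun x => w x) '' S = T := by
  obtain ⟨a, c, k, n, η, ha, hc, hac, hk, hn, hkn, hη, hSeq⟩ :=
    classify_triple hl S hS hScard hSorth
  obtain ⟨a', c', k', n', η', ha', hc', hac', hk', hn', hkn', hη', hTeq⟩ :=
    classify_triple hl T hT hTcard hTorth
  obtain ⟨wS, hwS, hwSim⟩ := reduce_all hl a c k n η ha hc hac hk hn hkn hη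
  obtain ⟨wT, hwT, hwTim⟩ := reduce_all hl a' c' k' n' η' ha' hc' hac' hk' hn' hkn' hη'
  refine ⟨wT⁻¹ * wS, mul_mem (inv_mem hwT) hwS, ?_⟩
  have h1 : (fun x => (wT⁻¹ * wS) x) '' S = (fun x => wT⁻¹ x) '' ((fun x => wS x) '' S) := by
    rw [Set.image_image]
    rfl
  rw [h1, hSeq, hwSim, ← hTeq] at *
  rw [← hTeq] at hwTim
  rw [← hwTim, Set.image_image]
  have h2 : (fun x => wT⁻¹ (wT x)) = fun x => x := by
    funext x
    exact wT.symm_apply_apply x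
  rw [h2, Set.image_id']
end
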